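/- arXiv:1808.05139 — 5 statements merged into one kernel-verified Lean document; each statement's English description precedes it below -/
import Mathlib

section
/- For an odd prime p, every automorphism of the group G_p = ⟨a,b | a^p=b^{p^2}=1, aba^{-1}=b^{p+1}⟩ is of the form b ↦ b^i a^j, a ↦ b^{mp} a, for some unit i in Z/p^2 and some j, m in Z/p. -/
set_option linter.unusedSectionVars false

def Gp (p : ℕ) : Type := ZMod (p ^ 2) × ZMod p

namespace Gp

variable {p : ℕ} [NeZero p]

/-- `(p+1)^a` in `ZMod (p^2)`, computed as `1 + p·a`. -/
def u (a : ZMod p) : ZMod (p ^ 2) := 1 + (p : ZMod (p ^ 2)) * (a.val : ZMod (p ^ 2))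

lemma p_mul_p : (p : ZMod (p ^ 2)) * (p : ZMod (p ^ 2)) = 0 := by
  rw [← Nat.cast_mul, show p * p = p ^ 2 by ring, ZMod.natCast_self]

lemma pmul_mod (x : ℕ) :
    (p : ZMod (p ^ 2)) * ((x % p : ℕ) : ZMod (p ^ 2)) = (p : ZMod (p ^ 2)) * x := by
  conv_rhs => rw [← Nat.div_add_mod x p]
  push_cast
  linear_combination (-(x / p : ℕ) : ZMod (p ^ 2)) * p_mul_p (p := p)

lemma u_add (a b : ZMod p) : u (a + b) = u a * u b := by
  unfold u
  rw [ZMod.val_add, pmul_mod]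
  push_cast
  linear_combination (-(a.val : ZMod (p ^ 2)) * (b.val : ZMod (p ^ 2))) * p_mul_p (p := p)

lemma u_zero : u (0 : ZMod p) = 1 := by
  unfold u
  rw [ZMod.val_zero]
  push_cast
  ring

private def gmul (x y : Gp p) : Gp p := (x.1 + u x.2 * y.1, x.2 + y.2)

private def ginv (x : Gp p) : Gp p := (-(u (-x.2) * x.1), -x.2)

private def gone : Gp p := ((0 : ZMod (p ^ 2)), (0 : ZMod p))

instance : Group (Gp p) where
  mul := gmul
  one := gone
  inv := ginv
  mul_assoc x y z := by
    show gmul (gmul x y) z = gmul x (gmul y z)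
    unfold gmul
    refine Prod.ext ?_ ?_ <;> dsimp
    · rw [u_add]; ring
    · ring
  one_mul x := by
    show gmul gone x = x
    unfold gmul gone
    refine Prod.ext ?_ ?_ <;> dsimp
    · rw [u_zero]; ring
    · ring
  mul_one x := by
    show gmul x gone = x
    unfold gmul gone
    refine Prod.ext ?_ ?_ <;> dsimp <;> ring
  inv_mul_cancel x := by
    show gmul (ginv x) x = gone
    unfold gmul ginv gone
    refine Prod.ext ?_ ?_ <;> dsimp <;> ring

/-- the generator `a` of order `p`. -/
def a (p : ℕ) : Gp p := ((0 : ZMod (p ^ 2)), (1 : ZMod p))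

/-- the generator `b` of order `p^2`. -/
def b (p : ℕ) : Gp p := ((1 : ZMod (p ^ 2)), (0 : ZMod p))

end Gp

/-!
Write `(s, t) : Gp p` for `bˢ aᵗ`. For odd `p`, `(s, t)ᵖ = (p s, 0)`, since `p ∣ C(p, 2)`.
Hence, writing `f a = (x, y)` and `f b = (z, w)`: `aᵖ = 1` gives `p x = 0`, so `x ∈ p ℤ/p²ℤ`,
while `bᵖ ≠ 1` gives `p z ≠ 0`, so `z` is a unit. Comparing first coordinates in
`f a · f b = (f b)ᵖ⁺¹ · f a` then gives `(1 + p y) z = (1 + p) z`, hence `y = 1`.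
-/

namespace Gp

variable {p : ℕ} [NeZero p]

@[ext]
lemma ext {x y : Gp p} (h₁ : x.1 = y.1) (h₂ : x.2 = y.2) : x = y := Prod.ext h₁ h₂

@[simp] lemma mul_fst (x y : Gp p) : (x * y).1 = x.1 + u x.2 * y.1 := rfl
@[simp] lemma mul_snd (x y : Gp p) : (x * y).2 = x.2 + y.2 := rfl
@[simp] lemma one_fst : (1 : Gp p).1 = 0 := rfl
@[simp] lemma one_snd : (1 : Gp p).2 = 0 := rfl
@[simp] lemma a_fst : (a p).1 = 0 := rfl
@[simp] lemma a_snd : (a p).2 = 1 := rfl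
@[simp] lemma b_fst : (b p).1 = 1 := rfl
@[simp] lemma b_snd : (b p).2 = 0 := rfl

lemma natCast_mul_eq_zero_iff (n : ℕ) : (p : ZMod (p ^ 2)) * n = 0 ↔ p ∣ n := by
  rw [← Nat.cast_mul, ZMod.natCast_eq_zero_iff, sq, Nat.mul_dvd_mul_iff_left (NeZero.pos p)]

lemma natCast_mul_val_natCast (n : ℕ) :
    (p : ZMod (p ^ 2)) * ((n : ZMod p).val : ZMod (p ^ 2)) = p * n := by
  rw [ZMod.val_natCast, pmul_mod]

lemma natCast_mul_val_mul (c d : ZMod p) :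
    (p : ZMod (p ^ 2)) * ((c * d).val : ZMod (p ^ 2)) = p * c.val * d.val := by
  rw [ZMod.val_mul, pmul_mod, Nat.cast_mul, mul_assoc]

lemma u_one : u (1 : ZMod p) = 1 + p := by
  simpa [u] using natCast_mul_val_natCast (p := p) 1

lemma u_mul_of_natCast_mul_eq_zero {x : ZMod (p ^ 2)} (hx : (p : ZMod (p ^ 2)) * x = 0)
    (c : ZMod p) : u c * x = x := by
  rw [u]
  linear_combination (c.val : ZMod (p ^ 2)) * hx

lemma u_injective : Function.Injective (u : ZMod p → ZMod (p ^ 2)) := by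
  intro c d h
  have hcast : ((p * c.val : ℕ) : ZMod (p ^ 2)) = (p * d.val : ℕ) := by
    push_cast
    simpa [u] using h
  have hlt (e : ZMod p) : p * e.val < p ^ 2 := by
    rw [sq]; exact Nat.mul_lt_mul_of_pos_left e.val_lt (NeZero.pos p)
  rw [ZMod.natCast_eq_natCast_iff', Nat.mod_eq_of_lt (hlt c), Nat.mod_eq_of_lt (hlt d)] at hcast
  exact ZMod.val_injective _ (Nat.eq_of_mul_eq_mul_left (NeZero.pos p) hcast)

@[simp] lemma pow_snd (g : Gp p) (n : ℕ) : (g ^ n).2 = n * g.2 := by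
  induction n with
  | zero => simp
  | succ n ih => rw [pow_succ g, mul_snd, ih]; push_cast; ring

@[simp] lemma pow_fst (g : Gp p) (n : ℕ) :
    (g ^ n).1 = (n + p * n.choose 2 * g.2.val) * g.1 := by
  induction n with
  | zero => simp
  | succ n ih =>
    rw [pow_succ g, mul_fst, ih, pow_snd, u, natCast_mul_val_mul, natCast_mul_val_natCast,
      Nat.choose_succ_succ', Nat.choose_one_right]
    push_cast
    ring

lemma dvd_choose_two_of_odd (hodd : Odd p) : p ∣ p.choose 2 := by
  obtain ⟨k, rfl⟩ := hodd
  refine ⟨k, ?_⟩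
  rw [Nat.choose_two_right, Nat.add_sub_cancel, mul_comm 2 k, ← mul_assoc,
    Nat.mul_div_cancel _ two_pos]

lemma pow_self_fst (hodd : Odd p) (g : Gp p) : (g ^ p).1 = p * g.1 := by
  obtain ⟨k, hk⟩ := dvd_choose_two_of_odd hodd
  rw [pow_fst, hk]
  push_cast
  linear_combination (k * g.2.val * g.1 : ZMod (p ^ 2)) * p_mul_p (p := p)

lemma pow_self_snd (g : Gp p) : (g ^ p).2 = 0 := by
  rw [pow_snd, ZMod.natCast_self, zero_mul]

lemma pow_self_eq_one_iff (hodd : Odd p) (g : Gp p) :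
    g ^ p = 1 ↔ (p : ZMod (p ^ 2)) * g.1 = 0 := by
  rw [Gp.ext_iff, pow_self_fst hodd, pow_self_snd]
  simp

lemma pow_succ_self_fst (hodd : Odd p) (g : Gp p) : (g ^ (p + 1)).1 = (p + 1) * g.1 := by
  rw [pow_succ g, mul_fst, pow_self_fst hodd, pow_self_snd, u_zero]
  ring

lemma eq_b_pow_mul_a_pow (g : Gp p) : g = b p ^ g.1.val * a p ^ g.2.val := by
  ext <;> simp [u_zero]

lemma a_mul_b : a p * b p = b p ^ (p + 1) * a p := by
  ext <;> simp [u_zero, u_one, add_comm]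

lemma a_pow_self (hodd : Odd p) : a p ^ p = 1 := by
  simp [pow_self_eq_one_iff hodd]

lemma b_pow_self_ne_one (hodd : Odd p) (hp : p ≠ 1) : b p ^ p ≠ 1 := by
  simpa [pow_self_eq_one_iff hodd] using
    (natCast_mul_eq_zero_iff (p := p) 1).not.2 (by simpa using hp)

lemma isUnit_of_natCast_mul_ne_zero (hp : p.Prime) {z : ZMod (p ^ 2)}
    (hz : (p : ZMod (p ^ 2)) * z ≠ 0) : IsUnit z := by
  rw [← ZMod.natCast_zmod_val z, Ne, natCast_mul_eq_zero_iff] at hz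
  rw [← ZMod.natCast_zmod_val z, ZMod.isUnit_iff_coprime]
  exact (((Nat.Prime.coprime_iff_not_dvd hp).2 hz).pow_left 2).symm

lemma exists_eq_val_mul_of_natCast_mul_eq_zero {x : ZMod (p ^ 2)}
    (hx : (p : ZMod (p ^ 2)) * x = 0) : ∃ m : ZMod p, x = ((m.val * p : ℕ) : ZMod (p ^ 2)) := by
  rw [← ZMod.natCast_zmod_val x, natCast_mul_eq_zero_iff] at hx
  obtain ⟨k, hk⟩ := hx
  refine ⟨k, ?_⟩
  rw [← ZMod.natCast_zmod_val x, hk, ZMod.val_natCast, Nat.cast_mul, Nat.cast_mul,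
    mul_comm ((k % p : ℕ) : ZMod (p ^ 2)), pmul_mod]

lemma snd_eq_one_of_mul_eq_pow_succ_mul (hodd : Odd p) {g h : Gp p} (hg : IsUnit g.1)
    (hh : (p : ZMod (p ^ 2)) * h.1 = 0) (hrel : h * g = g ^ (p + 1) * h) : h.2 = 1 := by
  have hfst := congrArg (·.1) hrel
  simp only [mul_fst, pow_succ_self_fst hodd, u_mul_of_natCast_mul_eq_zero hh] at hfst
  have : u h.2 * g.1 = u 1 * g.1 := by rw [u_one]; linear_combination hfst
  exact u_injective (hg.mul_right_cancel this)

end Gp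

/-- For an odd prime `p`, every automorphism of the group
`G_p = ⟨a, b | aᵖ = b^{p²} = 1, a b a⁻¹ = b^{p+1}⟩` has the form
`b ↦ bⁱ aʲ`, `a ↦ b^{mp} a` for some unit `i` of `Z/p²` and some
`j, m ∈ Z/p`. -/
theorem gp_aut_form (p : ℕ) (hp : p.Prime) (hodd : Odd p) [NeZero p]
    (f : MulAut (Gp p)) :
    ∃ (i : (ZMod (p ^ 2))ˣ) (j m : ZMod p),
      f (Gp.b p) = Gp.b p ^ ((i : ZMod (p ^ 2)).val) * Gp.a p ^ j.val ∧
      f (Gp.a p) = Gp.b p ^ (m.val * p) * Gp.a p := by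
  open Gp in
  have hfa : (p : ZMod (p ^ 2)) * (f (a p)).1 = 0 := by
    rw [← pow_self_eq_one_iff hodd, ← map_pow, a_pow_self hodd, map_one]
  have hfb : IsUnit (f (b p)).1 := by
    refine isUnit_of_natCast_mul_ne_zero hp fun h ↦ b_pow_self_ne_one hodd hp.one_lt.ne' ?_
    rwa [← pow_self_eq_one_iff hodd, ← map_pow, map_eq_one_iff f f.injective] at h
  have hfa_snd : (f (a p)).2 = 1 :=
    snd_eq_one_of_mul_eq_pow_succ_mul hodd hfb hfa
      (by rw [← map_pow, ← map_mul, ← map_mul, a_mul_b])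
  obtain ⟨m, hm⟩ := exists_eq_val_mul_of_natCast_mul_eq_zero hfa
  refine ⟨hfb.unit, (f (b p)).2, m, eq_b_pow_mul_a_pow _, ?_⟩
  ext <;> simp [hm, hfa_snd, u_zero]
end

section
/- For an odd prime p, the action of the unit group (Z/p^3)^* on Z/p^3 by multiplication by squares (k acting as x ↦ k^2 x) has exactly 7 orbits. -/
/-!
Every nonzero `x ∈ ℤ/p³` is `ε * p ^ k` with `ε` a unit and `k < 3`, and `k` is an orbit
invariant since it is read off from the annihilator of `x`. For fixed `k`, the units `ε` and `ε'`
give the same orbit iff `ε'/ε` is a square times a unit `≡ 1 mod p`. Units `≡ 1 mod p` have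
`p`-power order, hence are squares as `p` is odd, and the squares have index `2` in the cyclic
group `(ℤ/p³)ˣ` of even order. So the nonzero orbits are classified by `k` and the square class
of `ε`, giving `2 * 3 + 1` orbits in all.
-/

theorem isSquare_of_pow_eq_one_of_odd {M : Type*} [Monoid M] {g : M} {m : ℕ} (hm : Odd m)
    (h : g ^ m = 1) : IsSquare g := by
  obtain ⟨t, rfl⟩ := hm
  refine ⟨g ^ (t + 1), ?_⟩
  calc g = g ^ (2 * t + 1) * g := by rw [h, one_mul]
    _ = g ^ (t + 1) * g ^ (t + 1) := by rw [← pow_succ, ← pow_add]; ring_nf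

theorem exists_finset_card_eq_of_existsUnique_rel {ι α : Type*} [Fintype ι] (R : α → α → Prop)
    (hR : ∀ x, R x x) (r : ι → α) (h : ∀ x, ∃! i, R x (r i)) :
    ∃ s : Finset α, s.card = Fintype.card ι ∧ ∀ x, ∃! y, y ∈ s ∧ R x y := by
  classical
  have hr : Function.Injective r := fun i j hij =>
    (h (r i)).unique (hR (r i)) (by rw [hij]; exact hR (r j))
  refine ⟨Finset.univ.image r, by rw [Finset.card_image_of_injective _ hr, Finset.card_univ],
    fun x => ?_⟩
  obtain ⟨i, hi, hunique⟩ := h x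
  refine ⟨r i, ⟨Finset.mem_image_of_mem _ (Finset.mem_univ _), hi⟩, ?_⟩
  rintro _ ⟨hy, hxy⟩
  obtain ⟨j, -, rfl⟩ := Finset.mem_image.1 hy
  rw [hunique j hxy]

namespace ZMod

variable {p n : ℕ}

theorem unit_mul_natCast_pow_eq_zero_iff (hp : p.Prime) (ε : (ZMod (p ^ n))ˣ) (k : ℕ) :
    (ε : ZMod (p ^ n)) * (p : ZMod (p ^ n)) ^ k = 0 ↔ n ≤ k := by
  rw [Units.mul_right_eq_zero, ← Nat.cast_pow, natCast_eq_zero_iff,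
    Nat.pow_dvd_pow_iff_le_right hp.one_lt]

theorem exists_unit_mul_natCast_pow_eq (hp : p.Prime) {x : ZMod (p ^ n)} (hx : x ≠ 0) :
    ∃ (ε : (ZMod (p ^ n))ˣ) (k : ℕ), k < n ∧ (ε : ZMod (p ^ n)) * (p : ZMod (p ^ n)) ^ k = x := by
  have : NeZero (p ^ n) := ⟨pow_ne_zero n hp.ne_zero⟩
  obtain ⟨k, m, hpm, hm⟩ := Nat.exists_eq_pow_mul_and_not_dvd ((val_ne_zero x).2 hx) p hp.ne_one
  have hcop : m.Coprime (p ^ n) := ((hp.coprime_iff_not_dvd).2 hpm).symm.pow_right n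
  have hx' : (unitOfCoprime m hcop : ZMod (p ^ n)) * (p : ZMod (p ^ n)) ^ k = x := by
    rw [coe_unitOfCoprime, ← natCast_zmod_val x, hm]; push_cast; ring
  refine ⟨unitOfCoprime m hcop, k, ?_, hx'⟩
  by_contra! hnk
  exact hx (hx' ▸ (unit_mul_natCast_pow_eq_zero_iff hp _ k).2 hnk)

theorem eq_of_unit_mul_natCast_pow_eq (hp : p.Prime) {ε ε' : (ZMod (p ^ n))ˣ} {j k : ℕ}
    (hj : j < n) (hk : k < n)
    (h : (ε : ZMod (p ^ n)) * (p : ZMod (p ^ n)) ^ j = ε' * (p : ZMod (p ^ n)) ^ k) : j = k := by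
  -- `p ^ m` kills `ε * p ^ j` exactly when `n ≤ m + j`, so the annihilator determines `j`
  have hkill : ∀ m, n ≤ m + j ↔ n ≤ m + k := fun m => by
    rw [← unit_mul_natCast_pow_eq_zero_iff hp ε, ← unit_mul_natCast_pow_eq_zero_iff hp ε', pow_add,
      pow_add, mul_left_comm, mul_left_comm (ε' : ZMod (p ^ n)), h]
  have := hkill (n - j)
  have := hkill (n - k)
  omega

theorem natCast_dvd_of_natCast_pow_mul_eq_zero (hp : p.Prime) {y : ZMod (p ^ n)} {k : ℕ}
    (hk : k < n) (h : (p : ZMod (p ^ n)) ^ k * y = 0) : (p : ZMod (p ^ n)) ∣ y := by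
  rcases eq_or_ne y 0 with rfl | hy
  · exact dvd_zero _
  obtain ⟨ε, m, -, rfl⟩ := exists_unit_mul_natCast_pow_eq hp hy
  rw [mul_left_comm, ← pow_add, unit_mul_natCast_pow_eq_zero_iff hp] at h
  exact (dvd_pow_self _ (by omega)).mul_left _

theorem isSquare_of_natCast_dvd_sub_one (hodd : Odd p) {η : (ZMod (p ^ n))ˣ}
    (h : (p : ZMod (p ^ n)) ∣ η - 1) : IsSquare η := by
  refine isSquare_of_pow_eq_one_of_odd (hodd.pow (n := n)) (Units.ext ?_)
  have := dvd_sub_pow_of_dvd_sub h n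
  rwa [one_pow, pow_succ, ← Nat.cast_pow, natCast_self, zero_mul, zero_dvd_iff, sub_eq_zero] at this

theorem index_square_units (hp : p.Prime) (hodd : Odd p) (hn : 0 < n) :
    (Subgroup.square (ZMod (p ^ n))ˣ).index = 2 := by
  have : NeZero (p ^ n) := ⟨pow_ne_zero n hp.ne_zero⟩
  have hp2 : p ≠ 2 := by rintro rfl; exact Nat.not_even_iff_odd.2 hodd even_two
  have := isCyclic_units_of_prime_pow p hp hp2 n
  have hsq : Subgroup.square (ZMod (p ^ n))ˣ = (powMonoidHom 2).range := by
    ext x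
    simp only [Subgroup.mem_square, MonoidHom.mem_range, powMonoidHom_apply, IsSquare, sq, eq_comm]
  rw [hsq, IsCyclic.index_powMonoidHom_range, Nat.card_eq_fintype_card, card_units_eq_totient,
    Nat.gcd_eq_right (Nat.totient_even _).two_dvd]
  have := hp.two_le
  exact (by omega : 2 < p).trans_le (Nat.le_self_pow hn.ne' p)

theorem exists_sq_mul_unit_mul_natCast_pow_eq_iff (hp : p.Prime) (hodd : Odd p)
    {ε ε' : (ZMod (p ^ n))ˣ} {j k : ℕ} (hj : j < n) (hk : k < n) :
    (∃ δ : (ZMod (p ^ n))ˣ, (ε' : ZMod (p ^ n)) * (p : ZMod (p ^ n)) ^ k =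
        (δ : ZMod (p ^ n)) ^ 2 * (ε * (p : ZMod (p ^ n)) ^ j)) ↔
      j = k ∧ (IsSquare ε ↔ IsSquare ε') := by
  have hidx := index_square_units hp hodd (n := n) (by omega)
  constructor
  · rintro ⟨δ, h⟩
    set w := δ ^ 2 * ε
    have hw : (ε' : ZMod (p ^ n)) * (p : ZMod (p ^ n)) ^ k = w * (p : ZMod (p ^ n)) ^ j := by
      rw [h, Units.val_mul, Units.val_pow_eq_pow_val, mul_assoc]
    obtain rfl := eq_of_unit_mul_natCast_pow_eq hp hj hk hw.symm
    refine ⟨rfl, ?_⟩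
    have hsq : IsSquare (w⁻¹ * ε') := by
      refine isSquare_of_natCast_dvd_sub_one hodd (natCast_dvd_of_natCast_pow_mul_eq_zero hp hj ?_)
      push_cast
      linear_combination (↑w⁻¹ : ZMod (p ^ n)) * hw + (p : ZMod (p ^ n)) ^ j * Units.inv_mul w
    have hδ : δ ^ 2 ∈ Subgroup.square (ZMod (p ^ n))ˣ := ⟨δ, sq δ⟩
    rwa [← Subgroup.mem_square, Subgroup.mul_mem_iff_of_index_two hidx, inv_mem_iff,
      Subgroup.mul_mem_cancel_left _ hδ] at hsq
  · rintro ⟨rfl, hε⟩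
    obtain ⟨δ, hδ⟩ : IsSquare (ε' * ε⁻¹) := by
      rw [← Subgroup.mem_square, Subgroup.mul_mem_iff_of_index_two hidx, inv_mem_iff]
      exact hε.symm
    refine ⟨δ, ?_⟩
    rw [← mul_assoc, sq, ← Units.val_mul, ← hδ, ← Units.val_mul, inv_mul_cancel_right]

def orbitRep (p n : ℕ) (u : (ZMod (p ^ n))ˣ) : Option (Bool × Fin n) → ZMod (p ^ n)
  | none => 0
  | some (c, k) =>
    ((bif c then u else 1 : (ZMod (p ^ n))ˣ) : ZMod (p ^ n)) * (p : ZMod (p ^ n)) ^ (k : ℕ)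

theorem existsUnique_orbitRep_eq_sq_mul (hp : p.Prime) (hodd : Odd p) {u : (ZMod (p ^ n))ˣ}
    (hu : ¬IsSquare u) (x : ZMod (p ^ n)) :
    ∃! i, ∃ δ : (ZMod (p ^ n))ˣ, orbitRep p n u i = (δ : ZMod (p ^ n)) ^ 2 * x := by
  classical
  rcases eq_or_ne x 0 with rfl | hx
  · refine ⟨none, ⟨1, by simp [orbitRep]⟩, ?_⟩
    rintro (_ | ⟨c, k⟩) ⟨δ, hδ⟩
    · rfl
    · rw [mul_zero, orbitRep, unit_mul_natCast_pow_eq_zero_iff hp] at hδ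
      exact absurd hδ (not_le.2 k.2)
  obtain ⟨ε, k, hk, rfl⟩ := exists_unit_mul_natCast_pow_eq hp hx
  suffices h : ∀ i, (∃ δ : (ZMod (p ^ n))ˣ, orbitRep p n u i = δ ^ 2 * (ε * p ^ k)) ↔
      i = some (!decide (IsSquare ε), ⟨k, hk⟩) from ⟨_, (h _).2 rfl, fun i hi => (h i).1 hi⟩
  rintro (_ | ⟨c, j⟩)
  · simp only [orbitRep, reduceCtorEq, iff_false, not_exists]
    intro δ h
    rw [← mul_assoc, ← Units.val_pow_eq_pow_val, ← Units.val_mul, eq_comm,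
      unit_mul_natCast_pow_eq_zero_iff hp] at h
    omega
  · rw [orbitRep, exists_sq_mul_unit_mul_natCast_pow_eq_iff hp hodd hk j.2]
    simp only [Option.some.injEq, Prod.mk.injEq, Fin.ext_iff, eq_comm (a := (j : ℕ))]
    by_cases hε : IsSquare ε <;> cases c <;> simp [hu, hε]

theorem exists_transversal_sq_orbits_card_eq (hp : p.Prime) (hodd : Odd p) (hn : 0 < n) :
    ∃ s : Finset (ZMod (p ^ n)), s.card = 2 * n + 1 ∧
      ∀ x : ZMod (p ^ n), ∃! y, y ∈ s ∧ ∃ k : (ZMod (p ^ n))ˣ, y = (k : ZMod (p ^ n)) ^ 2 * x := by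
  obtain ⟨u, hu, -⟩ :=
    Subgroup.index_eq_two_iff_exists_notMem_and.1 (index_square_units hp hodd hn)
  obtain ⟨s, hs, hrep⟩ := exists_finset_card_eq_of_existsUnique_rel
    (fun x y => ∃ k : (ZMod (p ^ n))ˣ, y = (k : ZMod (p ^ n)) ^ 2 * x) (fun x => ⟨1, by simp⟩)
    (orbitRep p n u) (existsUnique_orbitRep_eq_sq_mul hp hodd hu)
  exact ⟨s, by rw [hs]; simp, hrep⟩

end ZMod

/-- For an odd prime `p`, the action of the unit group `(Z/p³)ˣ` on `Z/p³` in
which a unit `k` acts by `x ↦ k² x` has exactly `7` orbits: there is a set of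
`7` representatives meeting every orbit exactly once. -/
theorem square_action_on_zmod_p_cubed_orbits (p : ℕ) (hp : p.Prime) (hodd : Odd p) :
    ∃ s : Finset (ZMod (p ^ 3)), s.card = 7 ∧
      ∀ x : ZMod (p ^ 3), ∃! y, y ∈ s ∧
        ∃ k : (ZMod (p ^ 3))ˣ, y = ((k : ZMod (p ^ 3))) ^ 2 * x :=
  ZMod.exists_transversal_sq_orbits_card_eq hp hodd (by norm_num)
end

section
/- Let p be an odd prime. Every nonzero quadratic form in three variables over F_p is equivalent under the action of GL(3, F_p) to exactly one of: y1^2, g·y1^2, y1^2+y2^2, g·y1^2+y2^2, y1^2+y2^2+y3^2, g·y1^2+y2^2+y3^2, where g is a fixed non-square unit of F_p. -/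
/-!
Diagonalise `Q`. In a finite field of odd characteristic every nonzero element is a square or
`g` times a square, and `a x² + b y² = 1` is solvable whenever `a, b ≠ 0`, which turns the weights
`(a, b)` into `(1, a b)`. Hence the nonzero weights can be gathered into `(d, 1, …, 1)`, and `d`
scaled to `1` or `g`.

Conversely, Gram determinants `det (polar Q (vᵢ) (vⱼ))` of `k`-tuples are preserved by isometries.
For a diagonal form whose weights vanish beyond position `k` they are `2ᵏ w₀ ⋯ w_{k-1}` times a
square, while on the first `k` basis vectors of any diagonal form they equal `2ᵏ w₀ ⋯ w_{k-1}`.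
So the leading products of the weights are invariants up to squares; they detect both the rank
and the square class of the discriminant, and separate the six normal forms.
-/

open Matrix

namespace QuadraticMap

section Gram

variable {R M M' : Type*} [CommRing R] [AddCommGroup M] [Module R M] [AddCommGroup M'] [Module R M']

def gramDet (Q : QuadraticMap R M R) {k : ℕ} (v : Fin k → M) : R :=
  (Matrix.of fun i j => polar Q (v i) (v j)).det

lemma Isometry.gramDet_comp {Q : QuadraticMap R M R} {Q' : QuadraticMap R M' R} (f : Q →qᵢ Q')
    {k : ℕ} (v : Fin k → M) : gramDet Q' (f ∘ v) = gramDet Q v := by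
  simp only [gramDet, Function.comp_apply, polar, ← map_add, f.map_app]

lemma polar_weightedSumSquares {ι : Type*} [Fintype ι] (w : ι → R) (x y : ι → R) :
    polar (weightedSumSquares R w) x y = 2 * ∑ i, w i * x i * y i := by
  simp only [polar, weightedSumSquares_apply, Pi.add_apply, smul_eq_mul, ← Finset.sum_sub_distrib,
    Finset.mul_sum]
  exact Finset.sum_congr rfl fun i _ => by ring

lemma gramDet_weightedSumSquares {n : ℕ} (w : Fin n → R) (v : Fin n → Fin n → R) :
    gramDet (weightedSumSquares R w) v = 2 ^ n * (∏ i, w i) * (Matrix.of v).det ^ 2 := by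
  have : (Matrix.of fun i j => polar (weightedSumSquares R w) (v i) (v j)) =
      (2 : R) • (Matrix.of v * diagonal w * (Matrix.of v)ᵀ) := by
    ext i j
    rw [Matrix.smul_apply, mul_apply]
    simp only [of_apply, polar_weightedSumSquares, mul_diagonal, transpose_apply, smul_eq_mul]
    exact congrArg _ (Finset.sum_congr rfl fun l _ => by ring)
  rw [gramDet, this, det_smul, det_mul, det_mul, det_transpose, det_diagonal, Fintype.card_fin]
  ring

lemma gramDet_fin_two_weightedSumSquares (w : Fin 3 → R) (v : Fin 2 → Fin 3 → R) :
    gramDet (weightedSumSquares R w) v =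
      4 * (w 0 * w 1 * (v 0 0 * v 1 1 - v 0 1 * v 1 0) ^ 2
        + w 0 * w 2 * (v 0 0 * v 1 2 - v 0 2 * v 1 0) ^ 2
        + w 1 * w 2 * (v 0 1 * v 1 2 - v 0 2 * v 1 1) ^ 2) := by
  simp only [gramDet, det_fin_two, of_apply, polar_weightedSumSquares, Fin.sum_univ_three]
  ring

lemma Equivalent.exists_weight_eq_mul_sq {ι : Type*} [Fintype ι] [DecidableEq ι] {w w' : ι → R}
    (h : (weightedSumSquares R w).Equivalent (weightedSumSquares R w')) (i j : ι)
    (hw' : ∀ l ≠ i, w' l = 0) : ∃ m, w j = w' i * m ^ 2 := by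
  obtain ⟨f⟩ := h
  refine ⟨f (Pi.single j 1) i, ?_⟩
  have := f.map_app (Pi.single j 1)
  simp only [weightedSumSquares_apply] at this
  rw [Finset.sum_eq_single i (fun l _ hl => by simp [hw' l hl]) (by simp)] at this
  simp only [Pi.single_apply, mul_ite, mul_one, mul_zero, Finset.sum_ite_eq', Finset.mem_univ,
    if_true, smul_eq_mul] at this
  linear_combination -this

variable [IsDomain R]

lemma Equivalent.exists_mul_eq_mul_sq {w w' : Fin 3 → R} (h2 : (2 : R) ≠ 0)
    (h : (weightedSumSquares R w).Equivalent (weightedSumSquares R w')) (hw' : w' 2 = 0) :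
    ∃ m, w 0 * w 1 = w' 0 * w' 1 * m ^ 2 := by
  obtain ⟨f⟩ := h
  let e : Fin 2 → Fin 3 → R := ![Pi.single 0 1, Pi.single 1 1]
  refine ⟨f.toIsometry (e 0) 0 * f.toIsometry (e 1) 1 - f.toIsometry (e 0) 1 * f.toIsometry (e 1) 0,
    mul_left_cancel₀ (pow_ne_zero 2 h2) ?_⟩
  have := f.toIsometry.gramDet_comp e
  rw [gramDet_fin_two_weightedSumSquares, gramDet_fin_two_weightedSumSquares, hw'] at this
  simp only [e, Function.comp_apply, Matrix.cons_val_zero, Matrix.cons_val_one, Pi.single_apply,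
    Fin.reduceEq, ↓reduceIte] at this ⊢
  linear_combination -this

lemma Equivalent.exists_prod_eq_mul_sq {n : ℕ} {w w' : Fin n → R} (h2 : (2 : R) ≠ 0)
    (h : (weightedSumSquares R w).Equivalent (weightedSumSquares R w')) :
    ∃ m, ∏ i, w i = (∏ i, w' i) * m ^ 2 := by
  obtain ⟨f⟩ := h
  let e : Fin n → Fin n → R := fun i => Pi.single i 1
  refine ⟨(Matrix.of (f.toIsometry ∘ e)).det, mul_left_cancel₀ (pow_ne_zero n h2) ?_⟩
  have := f.toIsometry.gramDet_comp e
  rw [gramDet_weightedSumSquares, gramDet_weightedSumSquares] at this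
  have he : Matrix.of e = 1 := by ext i j; simp [e, Pi.single_apply, one_apply, eq_comm]
  rw [he, det_one] at this
  linear_combination -this

lemma Equivalent.exists_leading_prod_eq_mul_sq {w w' : Fin 3 → R} (h2 : (2 : R) ≠ 0)
    (h : (weightedSumSquares R w).Equivalent (weightedSumSquares R w')) :
    (w' 1 = 0 → w' 2 = 0 → ∃ m, w 0 = w' 0 * m ^ 2) ∧
      (w' 2 = 0 → ∃ m, w 0 * w 1 = w' 0 * w' 1 * m ^ 2) ∧
      ∃ m, w 0 * w 1 * w 2 = w' 0 * w' 1 * w' 2 * m ^ 2 := by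
  refine ⟨fun h1 h2' => h.exists_weight_eq_mul_sq 0 0 fun l hl => ?_,
    h.exists_mul_eq_mul_sq h2, by simpa [Fin.prod_univ_three] using h.exists_prod_eq_mul_sq h2⟩
  fin_cases l <;> simp_all

end Gram

variable {R : Type*} [CommRing R]

lemma equivalent_iff_exists_generalLinearGroup {n N : Type*} [Fintype n] [DecidableEq n]
    [AddCommGroup N] [Module R N] (Q Q' : QuadraticMap R (n → R) N) :
    Q.Equivalent Q' ↔ ∃ A : GL n R, ∀ v, Q v = Q' (A *ᵥ v) := by
  constructor
  · rintro ⟨f⟩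
    refine ⟨GeneralLinearGroup.toLin.symm
      ((LinearMap.GeneralLinearGroup.generalLinearEquiv R _).symm f.toLinearEquiv), fun v => ?_⟩
    have := GeneralLinearGroup.toLin_apply (GeneralLinearGroup.toLin.symm
      ((LinearMap.GeneralLinearGroup.generalLinearEquiv R _).symm f.toLinearEquiv)) v
    simp only [MulEquiv.apply_symm_apply, mulVecLin_apply] at this
    rw [← this]
    exact (f.map_app v).symm
  · rintro ⟨A, hA⟩
    exact ⟨{ LinearMap.GeneralLinearGroup.generalLinearEquiv R _ (GeneralLinearGroup.toLin A) with
      map_app' := fun v => (hA v).symm }⟩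

lemma weightedSumSquares_equivalent_comp {ι ι' : Type*} [Fintype ι] [Fintype ι'] (w : ι → R)
    (e : ι' ≃ ι) : (weightedSumSquares R w).Equivalent (weightedSumSquares R (w ∘ e)) :=
  ⟨{ LinearEquiv.funCongrLeft R R e with
    map_app' := fun v => by
      simpa [weightedSumSquares_apply] using e.sum_comp fun i => w i * (v i * v i) }⟩

lemma weightedSumSquares_equivalent_of_eq_comp {ι : Type*} [Fintype ι] {w w' : ι → R}
    (σ : Equiv.Perm ι) (h : w' = w ∘ σ) :
    (weightedSumSquares R w).Equivalent (weightedSumSquares R w') :=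
  h ▸ weightedSumSquares_equivalent_comp w σ

lemma weightedSumSquares_equivalent_of_mul_sq_add_mul_sq {a b c x y : R}
    (h : a * x ^ 2 + b * y ^ 2 = 1) :
    (weightedSumSquares R ![a, b, c]).Equivalent (weightedSumSquares R ![1, a * b, c]) := by
  let A : Matrix (Fin 3) (Fin 3) R := !![a * x, b * y, 0; -y, x, 0; 0, 0, 1]
  have hA : A.det = 1 := by
    simp only [A, det_fin_three, of_apply, cons_val', cons_val_zero, cons_val_one,
      cons_val_fin_one, cons_val]
    linear_combination h
  refine (equivalent_iff_exists_generalLinearGroup _ _).2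
    ⟨GeneralLinearGroup.mk'' A (hA ▸ isUnit_one), fun v => ?_⟩
  simp only [A, GeneralLinearGroup.val_mk'', weightedSumSquares_apply, smul_eq_mul,
    Fin.sum_univ_three, cons_val_zero, cons_val_one, cons_val, cons_mulVec, dotProduct,
    empty_mulVec]
  -- `(a x v₀ + b y v₁)² + a b (x v₁ - y v₀)² = (a x² + b y²) (a v₀² + b v₁²)`
  linear_combination (-(a * v 0 ^ 2 + b * v 1 ^ 2)) * h

end QuadraticMap

-- `Monotone` for the order on `Prop`: the zero entries of `w ∘ σ` come last.
lemma exists_perm_monotone_eq_zero {M : Type*} [Zero M] {n : ℕ} (w : Fin n → M) :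
    ∃ σ : Equiv.Perm (Fin n), Monotone fun i => w (σ i) = 0 := by
  classical
  refine ⟨Tuple.sort fun i => decide (w i = 0), fun i j hij hi => ?_⟩
  have := Tuple.monotone_sort (fun i => decide (w i = 0)) hij
  simpa [Bool.le_iff_imp, hi] using this

namespace FiniteField

variable {F : Type*} [Field F] [Fintype F]

lemma exists_mul_sq_add_mul_sq_eq_one (hF : ringChar F ≠ 2) {a b : F} (ha : a ≠ 0) (hb : b ≠ 0) :
    ∃ x y : F, a * x ^ 2 + b * y ^ 2 = 1 := by
  open Polynomial in
  obtain ⟨x, y, h⟩ := exists_root_sum_quadratic (f := C a * X ^ 2) (g := C b * X ^ 2 - 1)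
    (by rw [degree_C_mul_X_pow 2 ha]; rfl)
    (by rw [degree_sub_eq_left_of_degree_lt] <;> rw [degree_C_mul_X_pow 2 hb] <;> simp)
    (odd_card_of_char_ne_two hF)
  refine ⟨x, y, ?_⟩
  simp only [eval_sub, eval_mul, eval_C, eval_pow, eval_X, eval_one] at h
  linear_combination h

lemma exists_eq_sq_or_eq_mul_sq {g : F} (hg : ¬IsSquare g) {d : F} (hd : d ≠ 0) :
    ∃ u : Fˣ, d = u ^ 2 ∨ d = g * u ^ 2 := by
  classical
  by_cases hds : IsSquare d
  · obtain ⟨r, rfl⟩ := hds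
    exact ⟨Units.mk0 r (by rintro rfl; simp at hd), Or.inl (by simp [sq])⟩
  · have hg0 : g ≠ 0 := by rintro rfl; exact hg IsSquare.zero
    obtain ⟨r, hr⟩ : IsSquare (d * g) := by
      rw [← quadraticChar_one_iff_isSquare (mul_ne_zero hd hg0), map_mul,
        quadraticChar_neg_one_iff_not_isSquare.2 hds, quadraticChar_neg_one_iff_not_isSquare.2 hg]
      norm_num
    have hr0 : r ≠ 0 := by rintro rfl; exact mul_ne_zero hd hg0 (by simpa using hr)
    refine ⟨Units.mk0 (r / g) (div_ne_zero hr0 hg0), Or.inr ?_⟩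
    simp only [Units.val_mk0]
    field_simp
    linear_combination hr

end FiniteField

open QuadraticMap

section NormalForm

variable {F : Type*} [Field F]

def normalWeights (g : F) : Fin 6 → Fin 3 → F :=
  ![![1, 0, 0], ![g, 0, 0], ![1, 1, 0], ![g, 1, 0], ![1, 1, 1], ![g, 1, 1]]

theorem eq_of_equivalent_normalWeights (h2 : (2 : F) ≠ 0) {g : F} (hg : ¬IsSquare g)
    {i j : Fin 6} (h : (weightedSumSquares F (normalWeights g i)).Equivalent
      (weightedSumSquares F (normalWeights g j))) : i = j := by
  have hg0 : g ≠ 0 := by rintro rfl; exact hg IsSquare.zero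
  have hsq : ∀ m : F, g ≠ m ^ 2 := fun m hm => hg ⟨m, by rw [hm, pow_two]⟩
  have hsq' : ∀ m : F, 1 ≠ g * m ^ 2 := fun m hm => hg ⟨m⁻¹, by
    have hm0 : m ≠ 0 := by rintro rfl; simp at hm
    field_simp
    linear_combination -hm⟩
  obtain ⟨h₁, h₂, h₃⟩ := h.exists_leading_prod_eq_mul_sq h2
  obtain ⟨h₁', h₂', h₃'⟩ := h.symm.exists_leading_prod_eq_mul_sq h2
  clear h
  -- distinct normal forms differ in whether some leading product vanishes or in its square class
  fin_cases i <;> fin_cases j <;>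
    simp [normalWeights, hg0, hsq, hsq'] at h₁ h₂ h₃ h₁' h₂' h₃' ⊢

section FiniteField

variable [Fintype F]

lemma weightedSumSquares_equivalent_one_or_equivalent_nonsquare {g : F} (hg : ¬IsSquare g)
    {d : F} (hd : d ≠ 0) (b c : F) :
    (weightedSumSquares F ![d, b, c]).Equivalent (weightedSumSquares F ![1, b, c]) ∨
      (weightedSumSquares F ![d, b, c]).Equivalent (weightedSumSquares F ![g, b, c]) := by
  obtain ⟨u, hu | hu⟩ := FiniteField.exists_eq_sq_or_eq_mul_sq hg hd
  · exact Or.inl ⟨QuadraticForm.isometryEquivWeightedSumSquaresWeightedSumSquares ![u, 1, 1]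
      fun i => by fin_cases i <;> simp [hu]⟩
  · exact Or.inr ⟨QuadraticForm.isometryEquivWeightedSumSquaresWeightedSumSquares ![u, 1, 1]
      fun i => by fin_cases i <;> simp [hu]⟩

variable (hF : ringChar F ≠ 2)
include hF

lemma weightedSumSquares_equivalent_rank_two {a b : F} (ha : a ≠ 0) (hb : b ≠ 0) :
    (weightedSumSquares F ![a, b, 0]).Equivalent (weightedSumSquares F ![a * b, 1, 0]) := by
  obtain ⟨x, y, hxy⟩ := FiniteField.exists_mul_sq_add_mul_sq_eq_one hF ha hb
  exact (weightedSumSquares_equivalent_of_mul_sq_add_mul_sq hxy).trans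
    (weightedSumSquares_equivalent_of_eq_comp (Equiv.swap 0 1) (by ext k; fin_cases k <;> rfl))

lemma weightedSumSquares_equivalent_rank_three {a b c : F} (ha : a ≠ 0) (hb : b ≠ 0)
    (hc : c ≠ 0) :
    (weightedSumSquares F ![a, b, c]).Equivalent (weightedSumSquares F ![a * b * c, 1, 1]) := by
  obtain ⟨x, y, hxy⟩ := FiniteField.exists_mul_sq_add_mul_sq_eq_one hF ha hb
  obtain ⟨x', y', hxy'⟩ := FiniteField.exists_mul_sq_add_mul_sq_eq_one hF hc (mul_ne_zero ha hb)
  refine (weightedSumSquares_equivalent_of_mul_sq_add_mul_sq hxy).trans <|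
    (weightedSumSquares_equivalent_of_eq_comp (Equiv.swap 0 2) ?_).trans <|
    (weightedSumSquares_equivalent_of_mul_sq_add_mul_sq (c := 1) hxy').trans <|
    weightedSumSquares_equivalent_of_eq_comp (Equiv.swap 0 1) ?_
  · ext k; fin_cases k <;> rfl
  · ext k; fin_cases k <;> simp [Equiv.swap_apply_def, mul_comm, mul_left_comm]

lemma exists_weightedSumSquares_equivalent_normalWeights {g : F} (hg : ¬IsSquare g)
    {w : Fin 3 → F} (hw : w ≠ 0) :
    ∃ i, (weightedSumSquares F w).Equivalent (weightedSumSquares F (normalWeights g i)) := by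
  obtain ⟨σ, hσ⟩ := exists_perm_monotone_eq_zero w
  have h := weightedSumSquares_equivalent_comp w σ
  have hwσ : w ∘ σ = ![w (σ 0), w (σ 1), w (σ 2)] := by ext k; fin_cases k <;> rfl
  rw [hwσ] at h
  by_cases ha : w (σ 0) = 0
  · refine absurd (funext fun k => ?_) hw
    simpa using hσ (Fin.zero_le (σ.symm k)) ha
  by_cases hb : w (σ 1) = 0
  · rw [hb, hσ (by decide : (1 : Fin 3) ≤ 2) hb] at h
    rcases weightedSumSquares_equivalent_one_or_equivalent_nonsquare hg ha 0 0 with h' | h'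
    exacts [⟨0, h.trans h'⟩, ⟨1, h.trans h'⟩]
  by_cases hc : w (σ 2) = 0
  · rw [hc] at h
    replace h := h.trans (weightedSumSquares_equivalent_rank_two hF ha hb)
    rcases weightedSumSquares_equivalent_one_or_equivalent_nonsquare hg (mul_ne_zero ha hb) 1 0
      with h' | h'
    exacts [⟨2, h.trans h'⟩, ⟨3, h.trans h'⟩]
  replace h := h.trans (weightedSumSquares_equivalent_rank_three hF ha hb hc)
  rcases weightedSumSquares_equivalent_one_or_equivalent_nonsquare hg
    (mul_ne_zero (mul_ne_zero ha hb) hc) 1 1 with h' | h'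
  exacts [⟨4, h.trans h'⟩, ⟨5, h.trans h'⟩]

theorem QuadraticForm.exists_equivalent_normalWeights {g : F} (hg : ¬IsSquare g)
    {Q : QuadraticForm F (Fin 3 → F)} (hQ : Q ≠ 0) :
    ∃ i, Q.Equivalent (weightedSumSquares F (normalWeights g i)) := by
  have := invertibleOfNonzero (Ring.two_ne_zero hF)
  obtain ⟨w, hw⟩ := Q.equivalent_weightedSumSquares
  replace hw := hw.trans
    (weightedSumSquares_equivalent_comp w (finCongr (Module.finrank_fin_fun F).symm))
  have hw0 : w ∘ finCongr (Module.finrank_fin_fun F).symm ≠ 0 := by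
    rintro h0
    rw [h0] at hw
    obtain ⟨f⟩ := hw
    refine hQ (QuadraticMap.ext fun v => ?_)
    rw [← f.map_app v]
    simp only [weightedSumSquares_apply, Pi.zero_apply, zero_smul, Finset.sum_const_zero,
      _root_.zero_apply]
  obtain ⟨i, hi⟩ := exists_weightedSumSquares_equivalent_normalWeights hF hg hw0
  exact ⟨i, hw.trans hi⟩

end FiniteField

end NormalForm

/-- Let `p` be an odd prime and `g` a fixed non-square unit of `F_p`.  Every
nonzero quadratic form in three variables over `F_p` is equivalent, under the
change-of-variables action of `GL(3, F_p)` (`(Q·A)(v) = Q(Av)`), to exactly one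
of the six forms `y₁²`, `g y₁²`, `y₁² + y₂²`, `g y₁² + y₂²`, `y₁² + y₂² + y₃²`,
`g y₁² + y₂² + y₃²`. -/
theorem quadratic_form_three_vars_classification (p : ℕ) (hp : p.Prime) (hodd : Odd p)
    (g : (ZMod p)ˣ) (hg : ¬ IsSquare (g : ZMod p))
    (Q : QuadraticForm (ZMod p) (Fin 3 → ZMod p)) (hQ : Q ≠ 0) :
    ∃! i : Fin 6,
      ∃ A : Matrix.GeneralLinearGroup (Fin 3) (ZMod p),
        ∀ v : Fin 3 → ZMod p,
          Q v =
            (![QuadraticMap.weightedSumSquares (ZMod p) ![1, 0, 0],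
               QuadraticMap.weightedSumSquares (ZMod p) ![(g : ZMod p), 0, 0],
               QuadraticMap.weightedSumSquares (ZMod p) ![1, 1, 0],
               QuadraticMap.weightedSumSquares (ZMod p) ![(g : ZMod p), 1, 0],
               QuadraticMap.weightedSumSquares (ZMod p) ![1, 1, 1],
               QuadraticMap.weightedSumSquares (ZMod p) ![(g : ZMod p), 1, 1]] i)
              ((A : Matrix (Fin 3) (Fin 3) (ZMod p)).mulVec v) := by
  have := Fact.mk hp
  have hF : ringChar (ZMod p) ≠ 2 := by
    rw [ZMod.ringChar_zmod_n]
    rintro rfl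
    exact Nat.not_even_iff_odd.2 hodd even_two
  -- the weights `![1, 0, 0]`, `![1, 1, 0]`, `![1, 1, 1]` of the statement live in `ℕ`
  have hforms : ![weightedSumSquares (ZMod p) ![1, 0, 0],
      weightedSumSquares (ZMod p) ![(g : ZMod p), 0, 0], weightedSumSquares (ZMod p) ![1, 1, 0],
      weightedSumSquares (ZMod p) ![(g : ZMod p), 1, 0], weightedSumSquares (ZMod p) ![1, 1, 1],
      weightedSumSquares (ZMod p) ![(g : ZMod p), 1, 1]] =
      fun i => weightedSumSquares (ZMod p) (normalWeights (g : ZMod p) i) := by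
    ext i v
    fin_cases i <;> simp [normalWeights, weightedSumSquares_apply, Fin.sum_univ_three]
  simp only [hforms, ← equivalent_iff_exists_generalLinearGroup]
  obtain ⟨i, hi⟩ := QuadraticForm.exists_equivalent_normalWeights hF hg hQ
  exact ⟨i, hi, fun j hj =>
    eq_of_equivalent_normalWeights (Ring.two_ne_zero hF) hg (hj.symm.trans hi)⟩
end

section
/- Let p be an odd prime. Consider the action of the group Γ = (Z/p)^* × Z/p × Z/p × (Z/p^2)^* (parametrizing automorphisms of Z/p^2 × Z/p by (l,j,k,i)) on Z/p ⊕ Z/p ⊕ Z/p^2 = ⟨u^2⟩ ⊕ ⟨uv⟩ ⊕ ⟨v^2⟩ given by u^2 ↦ l^2 u^2, uv ↦ lk u^2 + il uv + pij v^2, v^2 ↦ k^2 u^2 + 2ik uv + i^2 v^2 (extended linearly). Then this action has exactly 16 orbits. -/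
/-- The action of an automorphism of `Z/p² × Z/p` with parameters
`(l, j, k, i) ∈ (Z/p)ˣ × Z/p × Z/p × (Z/p²)ˣ` on
`H⁴(Z/p² × Z/p, Z) ≅ Z/p⟨u²⟩ ⊕ Z/p⟨uv⟩ ⊕ Z/p²⟨v²⟩`, determined by
`u² ↦ l²u²`, `uv ↦ lk u² + il uv + pij v²`, `v² ↦ k² u² + 2ik uv + i² v²`
and extended additively.  An element is recorded as `(x, y, z)` with `x, y` the
coefficients of `u²`, `uv` and `z` that of `v²`. -/
def H4act (p : ℕ) (l : (ZMod p)ˣ) (j k : ZMod p) (i : (ZMod (p ^ 2))ˣ)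
    (m : ZMod p × ZMod p × ZMod (p ^ 2)) : ZMod p × ZMod p × ZMod (p ^ 2) :=
  ( (l : ZMod p) ^ 2 * m.1 + (l : ZMod p) * k * m.2.1
      + k ^ 2 * ((m.2.2.val : ZMod p)),
    ((i : ZMod (p ^ 2)).val : ZMod p) * (l : ZMod p) * m.2.1
      + 2 * ((i : ZMod (p ^ 2)).val : ZMod p) * k * ((m.2.2.val : ZMod p)),
    (p : ZMod (p ^ 2)) * (i : ZMod (p ^ 2)) * (j.val : ZMod (p ^ 2))
        * (m.2.1.val : ZMod (p ^ 2))
      + (i : ZMod (p ^ 2)) ^ 2 * m.2.2 )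

/-!
Write the class as `x u² + y uv + z v²` and let `red : Z/p² → Z/p` be reduction.
If `red z ≠ 0`, a suitable `k` completes the square and kills `uv`; what is left are the square
classes of `red z` and of `x - y² / (4 red z)`, which the action only multiplies by the nonzero
squares `red i²` and `l²`. Since `p` is odd, `(1 + p c)² = 1 + 2 p c` shows that units of `Z/p²`
with the same reduction differ by a square, so this gives `2 · 3 = 6` orbits.
If `red z = 0` but `y ≠ 0`, the term `pij v²` absorbs `z` and `k` absorbs `x`: one orbit.
If `red z = 0 = y`, then `z = p t` and `x`, `t` are scaled independently by `l²`, `red i²`: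
`3 · 3 = 9` orbits. Each orbit is detected by an explicit normal form.
-/

section SquareClass

variable {F : Type*} [Field F]

open Classical in
noncomputable def sqClassRep (ε a : F) : F :=
  if a = 0 then 0 else if IsSquare a then 1 else ε

theorem isSquare_sq_mul_iff {u : F} (hu : u ≠ 0) (a : F) :
    IsSquare (u ^ 2 * a) ↔ IsSquare a :=
  ⟨fun h => by simpa [hu] using (IsSquare.sq u⁻¹).mul h, (IsSquare.sq u).mul⟩

theorem sqClassRep_sq_mul (ε : F) {u : F} (hu : u ≠ 0) (a : F) :
    sqClassRep ε (u ^ 2 * a) = sqClassRep ε a := by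
  classical
  by_cases ha : a = 0
  · simp [ha]
  · rw [sqClassRep, sqClassRep, if_neg (mul_ne_zero (pow_ne_zero 2 hu) ha), if_neg ha]
    exact if_congr (isSquare_sq_mul_iff hu a) rfl rfl

variable [DecidableEq F]

theorem sqClassRep_mem (ε a : F) : sqClassRep ε a ∈ ({0, 1, ε} : Finset F) := by
  unfold sqClassRep; split_ifs <;> simp

theorem sqClassRep_mem_pair (ε : F) {a : F} (ha : a ≠ 0) :
    sqClassRep ε a ∈ ({1, ε} : Finset F) := by
  unfold sqClassRep; split_ifs <;> simp_all

theorem sqClassRep_eq_self {ε a : F} (hε : ¬IsSquare ε) (ha : a ∈ ({0, 1, ε} : Finset F)) :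
    sqClassRep ε a = a := by
  have hε0 : ε ≠ 0 := by rintro rfl; exact hε IsSquare.zero
  simp only [Finset.mem_insert, Finset.mem_singleton] at ha
  rcases ha with rfl | rfl | rfl <;> simp [sqClassRep, hε, hε0]

variable [Fintype F]

theorem isSquare_div_of_isSquare_iff {a b : F} (ha : a ≠ 0) (hb : b ≠ 0)
    (h : IsSquare a ↔ IsSquare b) : IsSquare (b / a) := by
  rw [show b / a = a⁻¹ ^ 2 * (b * a) by field_simp, isSquare_sq_mul_iff (inv_ne_zero ha),
    ← quadraticChar_one_iff_isSquare (mul_ne_zero hb ha), map_mul]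
  by_cases hsa : IsSquare a
  · rw [(quadraticChar_one_iff_isSquare ha).mpr hsa,
      (quadraticChar_one_iff_isSquare hb).mpr (h.mp hsa), one_mul]
  · rw [quadraticChar_neg_one_iff_not_isSquare.mpr hsa,
      quadraticChar_neg_one_iff_not_isSquare.mpr (mt h.mpr hsa), neg_one_mul, neg_neg]

theorem exists_sq_mul_eq_sqClassRep {ε : F} (hε : ¬IsSquare ε) (a : F) :
    ∃ u : Fˣ, (u : F) ^ 2 * a = sqClassRep ε a := by
  by_cases ha : a = 0
  · exact ⟨1, by simp [ha, sqClassRep]⟩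
  have hε0 : ε ≠ 0 := by rintro rfl; exact hε IsSquare.zero
  have hrep : sqClassRep ε a ≠ 0 ∧ (IsSquare a ↔ IsSquare (sqClassRep ε a)) := by
    unfold sqClassRep; split_ifs with hs <;> simp_all
  obtain ⟨r, hr⟩ := isSquare_div_of_isSquare_iff ha hrep.1 hrep.2
  have hr0 : r ≠ 0 := by rintro rfl; exact div_ne_zero hrep.1 ha (by simpa using hr)
  refine ⟨Units.mk0 r hr0, ?_⟩
  rw [Units.val_mk0, sq, ← hr, div_mul_cancel₀ _ ha]

end SquareClass

namespace ZModSq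

variable {p : ℕ} [Fact p.Prime]

def red : ZMod (p ^ 2) →+* ZMod p := ZMod.castHom (dvd_pow_self p two_ne_zero) (ZMod p)

theorem natCast_val_eq_red (z : ZMod (p ^ 2)) : (z.val : ZMod p) = red z :=
  ZMod.natCast_val z

@[simp] theorem red_natCast_val (a : ZMod p) : red (a.val : ZMod (p ^ 2)) = a := by
  rw [map_natCast, ZMod.natCast_zmod_val]

theorem red_unit_ne_zero (i : (ZMod (p ^ 2))ˣ) : red (i : ZMod (p ^ 2)) ≠ 0 :=
  (i.isUnit.map red).ne_zero

/-- `pmul` identifies `ZMod p` with the ideal `p • ZMod (p ^ 2) = ker red`; `pdiv` inverts it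
there. -/
def pmul (a : ZMod p) : ZMod (p ^ 2) := p * a.val

def pdiv (z : ZMod (p ^ 2)) : ZMod p := (z.val / p : ℕ)

theorem natCast_mul_eq_pmul_red (w : ZMod (p ^ 2)) : (p : ZMod (p ^ 2)) * w = pmul (red w) := by
  have hpp : (p : ZMod (p ^ 2)) * p = 0 := by
    rw [← Nat.cast_mul, ← sq, ZMod.natCast_self]
  conv_lhs => rw [← ZMod.natCast_zmod_val w, ← Nat.div_add_mod w.val p]
  rw [pmul, ← natCast_val_eq_red, ZMod.val_natCast]
  push_cast
  rw [mul_add, ← mul_assoc, hpp, zero_mul, zero_add]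

@[simp] theorem red_pmul (a : ZMod p) : red (pmul a) = 0 := by
  simp [pmul]

@[simp] theorem pmul_zero : pmul (0 : ZMod p) = 0 := by
  simp [pmul]

theorem pmul_add (a b : ZMod p) : pmul (a + b) = pmul a + pmul b := by
  have h : (p : ZMod (p ^ 2)) * (a.val + b.val) = pmul (a + b) := by
    rw [natCast_mul_eq_pmul_red, map_add, red_natCast_val, red_natCast_val]
  rw [← h, mul_add]
  rfl

theorem mul_pmul (w : ZMod (p ^ 2)) (a : ZMod p) : w * pmul a = pmul (red w * a) := by
  rw [pmul, mul_left_comm, natCast_mul_eq_pmul_red, map_mul, red_natCast_val]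

theorem pmul_mul_pmul (a b : ZMod p) : pmul a * pmul b = 0 := by
  rw [mul_pmul, red_pmul, zero_mul, pmul_zero]

theorem pdiv_pmul (a : ZMod p) : pdiv (pmul a) = a := by
  have hp := (Fact.out : p.Prime).pos
  have hlt : p * a.val < p ^ 2 := by rw [sq]; exact Nat.mul_lt_mul_of_pos_left a.val_lt hp
  rw [pdiv, pmul, ← Nat.cast_mul, ZMod.val_natCast, Nat.mod_eq_of_lt hlt,
    Nat.mul_div_cancel_left _ hp, ZMod.natCast_zmod_val]

theorem pmul_injective : Function.Injective (pmul (p := p)) :=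
  Function.LeftInverse.injective pdiv_pmul

theorem pmul_pdiv {z : ZMod (p ^ 2)} (hz : red z = 0) : pmul (pdiv z) = z := by
  have hp := (Fact.out : p.Prime).pos
  have hdvd : p ∣ z.val := by rwa [← natCast_val_eq_red, ZMod.natCast_eq_zero_iff] at hz
  have hlt : z.val / p < p := by
    rw [Nat.div_lt_iff_lt_mul hp, ← sq]; exact z.val_lt
  conv_rhs => rw [← ZMod.natCast_zmod_val z, ← Nat.mul_div_cancel' hdvd]
  rw [pmul, pdiv, ZMod.val_natCast, Nat.mod_eq_of_lt hlt, Nat.cast_mul]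

theorem exists_pmul_eq {z : ZMod (p ^ 2)} (hz : red z = 0) : ∃ d, pmul d = z :=
  ⟨pdiv z, pmul_pdiv hz⟩

theorem one_add_pmul_sq (c : ZMod p) : (1 + pmul c) ^ 2 = 1 + pmul (2 * c) := by
  rw [add_sq, pow_two (pmul c), pmul_mul_pmul, one_pow, mul_one, add_zero, mul_pmul, map_ofNat]

theorem exists_unit_sq_mul_eq_of_red_eq (h2 : (2 : ZMod p) ≠ 0) {z w : ZMod (p ^ 2)}
    (hz : red z ≠ 0) (h : red z = red w) :
    ∃ v : (ZMod (p ^ 2))ˣ, (v : ZMod (p ^ 2)) ^ 2 * z = w := by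
  set c := pdiv (w - z) / (2 * red z)
  have hv : IsUnit (1 + pmul c) :=
    IsNilpotent.isUnit_one_add ⟨2, by rw [pow_two (pmul c), pmul_mul_pmul]⟩
  have hc : red z * (2 * c) = pdiv (w - z) := by
    simp only [c]
    field_simp
  refine ⟨hv.unit, ?_⟩
  rw [IsUnit.unit_spec, one_add_pmul_sq, add_mul, one_mul, mul_comm, mul_pmul, hc,
    pmul_pdiv (by rw [map_sub, h, sub_self]), add_sub_cancel]

theorem exists_unit_red_eq (u : (ZMod p)ˣ) : ∃ i : (ZMod (p ^ 2))ˣ, red (i : ZMod (p ^ 2)) = u := by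
  obtain ⟨i, rfl⟩ := ZMod.unitsMap_surjective (dvd_pow_self p two_ne_zero) u
  exact ⟨i, rfl⟩

theorem exists_unit_sq_mul_eq (h2 : (2 : ZMod p) ≠ 0) {z w : ZMod (p ^ 2)} (hz : red z ≠ 0)
    {u : (ZMod p)ˣ} (h : (u : ZMod p) ^ 2 * red z = red w) :
    ∃ i : (ZMod (p ^ 2))ˣ, (i : ZMod (p ^ 2)) ^ 2 * z = w := by
  obtain ⟨s, hs⟩ := exists_unit_red_eq u
  have hsz : red ((s : ZMod (p ^ 2)) ^ 2 * z) = red w := by rw [map_mul, map_pow, hs, h]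
  obtain ⟨v, hv⟩ := exists_unit_sq_mul_eq_of_red_eq h2
    (by rw [hsz, ← h]; exact mul_ne_zero (pow_ne_zero 2 (Units.ne_zero _)) hz) hsz
  exact ⟨v * s, by rw [← hv]; push_cast; ring⟩

end ZModSq

namespace H4Zp2xZp

open ZModSq Finset

variable {p : ℕ} [Fact p.Prime]

theorem H4act_apply (l : (ZMod p)ˣ) (j k : ZMod p) (i : (ZMod (p ^ 2))ˣ) (x y : ZMod p)
    (z : ZMod (p ^ 2)) :
    H4act p l j k i (x, y, z) =
      ((l : ZMod p) ^ 2 * x + l * k * y + k ^ 2 * red z,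
        red (i : ZMod (p ^ 2)) * l * y + 2 * red (i : ZMod (p ^ 2)) * k * red z,
        pmul (red (i : ZMod (p ^ 2)) * j * y) + (i : ZMod (p ^ 2)) ^ 2 * z) := by
  simp only [H4act, natCast_val_eq_red, mul_assoc]
  rw [natCast_mul_eq_pmul_red]
  simp only [map_mul, red_natCast_val]

open Classical in
noncomputable def normalForm (ε : ZMod p) :
    ZMod p × ZMod p × ZMod (p ^ 2) → ZMod p × ZMod p × ZMod (p ^ 2)
  | (x, y, z) =>
    if red z ≠ 0 then
      (sqClassRep ε (x - y ^ 2 / (4 * red z)), 0, ((sqClassRep ε (red z)).val : ZMod (p ^ 2)))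
    else if y ≠ 0 then (0, 1, 0)
    else (sqClassRep ε x, 0, pmul (sqClassRep ε (pdiv z)))

section NormalForm

variable (ε : ZMod p) {x y d : ZMod p} {z : ZMod (p ^ 2)}

theorem normalForm_of_red_ne_zero (hz : red z ≠ 0) :
    normalForm ε (x, y, z) =
      (sqClassRep ε (x - y ^ 2 / (4 * red z)), 0, ((sqClassRep ε (red z)).val : ZMod (p ^ 2))) :=
  if_pos hz

theorem normalForm_pmul_of_ne_zero (hy : y ≠ 0) : normalForm ε (x, y, pmul d) = (0, 1, 0) := by
  simp [normalForm, hy]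

theorem normalForm_zero_pmul :
    normalForm ε (x, 0, pmul d) = (sqClassRep ε x, 0, pmul (sqClassRep ε d)) := by
  simp [normalForm, pdiv_pmul]

end NormalForm

theorem normalForm_H4act (h2 : (2 : ZMod p) ≠ 0) (ε : ZMod p) (l : (ZMod p)ˣ) (j k : ZMod p)
    (i : (ZMod (p ^ 2))ˣ) (m : ZMod p × ZMod p × ZMod (p ^ 2)) :
    normalForm ε (H4act p l j k i m) = normalForm ε m := by
  obtain ⟨x, y, z⟩ := m
  have hl : (l : ZMod p) ≠ 0 := l.ne_zero
  have hi : red (i : ZMod (p ^ 2)) ≠ 0 := red_unit_ne_zero i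
  rw [H4act_apply]
  by_cases hz : red z = 0
  · obtain ⟨d, rfl⟩ := exists_pmul_eq hz
    simp only [red_pmul, mul_zero, add_zero, mul_pmul, ← pmul_add]
    by_cases hy : y = 0
    · subst hy
      simp only [mul_zero, add_zero, zero_add]
      rw [normalForm_zero_pmul, normalForm_zero_pmul, sqClassRep_sq_mul ε hl, map_pow,
        sqClassRep_sq_mul ε hi]
    · rw [normalForm_pmul_of_ne_zero ε hy, normalForm_pmul_of_ne_zero]
      exact mul_ne_zero (mul_ne_zero hi hl) hy
  · have hz' : red (pmul (red (i : ZMod (p ^ 2)) * j * y) + (i : ZMod (p ^ 2)) ^ 2 * z) =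
        red (i : ZMod (p ^ 2)) ^ 2 * red z := by simp
    have hz0 : red (i : ZMod (p ^ 2)) ^ 2 * red z ≠ 0 := mul_ne_zero (pow_ne_zero 2 hi) hz
    have h4 : (4 : ZMod p) ≠ 0 := by
      rw [show (4 : ZMod p) = 2 ^ 2 by norm_num]; exact pow_ne_zero 2 h2
    rw [normalForm_of_red_ne_zero ε (hz' ▸ hz0), normalForm_of_red_ne_zero ε hz, hz',
      sqClassRep_sq_mul ε hi]
    have hdisc : (l : ZMod p) ^ 2 * x + l * k * y + k ^ 2 * red z -
        (red (i : ZMod (p ^ 2)) * l * y + 2 * red (i : ZMod (p ^ 2)) * k * red z) ^ 2 /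
          (4 * (red (i : ZMod (p ^ 2)) ^ 2 * red z)) =
        (l : ZMod p) ^ 2 * (x - y ^ 2 / (4 * red z)) := by
      field_simp
      ring
    rw [hdisc, sqClassRep_sq_mul ε hl]

theorem exists_H4act_eq_normalForm (h2 : (2 : ZMod p) ≠ 0) {ε : ZMod p} (hε : ¬IsSquare ε)
    (m : ZMod p × ZMod p × ZMod (p ^ 2)) :
    ∃ (l : (ZMod p)ˣ) (j k : ZMod p) (i : (ZMod (p ^ 2))ˣ), normalForm ε m = H4act p l j k i m := by
  obtain ⟨x, y, z⟩ := m
  by_cases hz : red z = 0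
  · obtain ⟨d, rfl⟩ := exists_pmul_eq hz
    by_cases hy : y = 0
    · subst hy
      obtain ⟨l, hl⟩ := exists_sq_mul_eq_sqClassRep hε x
      obtain ⟨u, hu⟩ := exists_sq_mul_eq_sqClassRep hε d
      obtain ⟨i, hi⟩ := exists_unit_red_eq u
      refine ⟨l, 0, 0, i, ?_⟩
      rw [normalForm_zero_pmul, H4act_apply, ← hl, ← hu, ← hi, ← map_pow, ← mul_pmul]
      simp
    · refine ⟨(Units.mk0 y hy)⁻¹, -d / y, -x / y ^ 2, 1, ?_⟩
      rw [normalForm_pmul_of_ne_zero ε hy, H4act_apply]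
      simp only [Units.val_inv_eq_inv_val, Units.val_mk0, Units.val_one, map_one, one_pow,
        one_mul, red_pmul, mul_zero, add_zero, Prod.mk.injEq]
      refine ⟨by field_simp; ring, by field_simp, ?_⟩
      rw [div_mul_cancel₀ _ hy, ← pmul_add, neg_add_cancel, pmul_zero]
  · have h4 : (4 : ZMod p) ≠ 0 := by
      rw [show (4 : ZMod p) = 2 ^ 2 by norm_num]; exact pow_ne_zero 2 h2
    obtain ⟨l, hl⟩ := exists_sq_mul_eq_sqClassRep hε (x - y ^ 2 / (4 * red z))
    obtain ⟨u, hu⟩ := exists_sq_mul_eq_sqClassRep hε (red z)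
    obtain ⟨i, hi⟩ := exists_unit_sq_mul_eq h2 hz (w := ((sqClassRep ε (red z)).val : ZMod (p ^ 2)))
      (by rw [red_natCast_val, hu])
    refine ⟨l, 0, -(l * y) / (2 * red z), i, ?_⟩
    rw [normalForm_of_red_ne_zero ε hz, H4act_apply, hi, ← hl]
    simp only [mul_zero, zero_mul, pmul_zero, zero_add, Prod.mk.injEq, and_true]
    constructor
    · field_simp
      ring
    · field_simp
      ring

def orbitReps (ε : ZMod p) : Finset (ZMod p × ZMod p × ZMod (p ^ 2)) :=
  {0, 1, ε} ×ˢ {0} ×ˢ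
      (({1, ε} : Finset (ZMod p)).image (fun a => (a.val : ZMod (p ^ 2))) ∪
        ({0, 1, ε} : Finset (ZMod p)).image pmul) ∪
    {(0, 1, 0)}

theorem card_orbitReps {ε : ZMod p} (hε : ¬IsSquare ε) : #(orbitReps ε) = 16 := by
  have hε0 : ε ≠ 0 := by rintro rfl; exact hε IsSquare.zero
  have hε1 : ε ≠ 1 := by rintro rfl; exact hε IsSquare.one
  have h3 : #({0, 1, ε} : Finset (ZMod p)) = 3 :=
    card_eq_three.2 ⟨0, 1, ε, zero_ne_one, hε0.symm, hε1.symm, rfl⟩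
  have hval : Function.Injective (fun a : ZMod p => (a.val : ZMod (p ^ 2))) :=
    fun a b h => by simpa using congrArg red h
  have hdisj : Disjoint (({1, ε} : Finset (ZMod p)).image (fun a => (a.val : ZMod (p ^ 2))))
      (({0, 1, ε} : Finset (ZMod p)).image pmul) := by
    refine disjoint_left.2 fun z hz hz' => ?_
    obtain ⟨b, hb, rfl⟩ := mem_image.1 hz
    obtain ⟨d, -, hd⟩ := mem_image.1 hz'
    have hb0 : 0 = b := by simpa using congrArg red hd
    simp [← hb0, hε0.symm] at hb
  rw [orbitReps, card_union_of_disjoint (disjoint_singleton_right.2 (by simp)), card_product,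
    card_product, card_union_of_disjoint hdisj, card_image_of_injective _ hval,
    card_image_of_injective _ pmul_injective, h3, card_pair hε1.symm, card_singleton,
    card_singleton]

theorem normalForm_mem_orbitReps (ε : ZMod p) (m : ZMod p × ZMod p × ZMod (p ^ 2)) :
    normalForm ε m ∈ orbitReps ε := by
  obtain ⟨x, y, z⟩ := m
  by_cases hz : red z = 0
  · obtain ⟨d, rfl⟩ := exists_pmul_eq hz
    by_cases hy : y = 0
    · subst hy
      rw [normalForm_zero_pmul]
      exact mem_union_left _ (mk_mem_product (sqClassRep_mem ε x) (mk_mem_product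
        (mem_singleton_self 0) (mem_union_right _ (mem_image_of_mem _ (sqClassRep_mem ε d)))))
    · rw [normalForm_pmul_of_ne_zero ε hy]
      exact mem_union_right _ (mem_singleton_self _)
  · rw [normalForm_of_red_ne_zero ε hz]
    exact mem_union_left _ (mk_mem_product (sqClassRep_mem ε _) (mk_mem_product
      (mem_singleton_self 0) (mem_union_left _ (mem_image_of_mem _ (sqClassRep_mem_pair ε hz)))))

theorem normalForm_eq_self {ε : ZMod p} (hε : ¬IsSquare ε) {w : ZMod p × ZMod p × ZMod (p ^ 2)}
    (hw : w ∈ orbitReps ε) : normalForm ε w = w := by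
  have hε0 : ε ≠ 0 := by rintro rfl; exact hε IsSquare.zero
  obtain ⟨x, y, z⟩ := w
  simp only [orbitReps, mem_union, mem_product, mem_singleton, mem_image, Prod.mk.injEq] at hw
  rcases hw with ⟨hx, rfl, ⟨b, hb, rfl⟩ | ⟨d, hd, rfl⟩⟩ | ⟨rfl, rfl, rfl⟩
  · have hb0 : b ≠ 0 := by
      rintro rfl
      simp [hε0.symm] at hb
    rw [normalForm_of_red_ne_zero ε (by simpa using hb0)]
    simp [sqClassRep_eq_self hε hx, sqClassRep_eq_self hε (mem_insert_of_mem hb)]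
  · rw [normalForm_zero_pmul, sqClassRep_eq_self hε hx, sqClassRep_eq_self hε hd]
  · simpa using normalForm_pmul_of_ne_zero ε (x := 0) (d := 0) one_ne_zero

end H4Zp2xZp

open H4Zp2xZp in
/-- Let `p` be an odd prime.  The above action of
`Γ = (Z/p)ˣ × Z/p × Z/p × (Z/p²)ˣ` on `Z/p ⊕ Z/p ⊕ Z/p²` has exactly `16`
orbits. -/
theorem H4_Zp2xZp_orbit_count (p : ℕ) (hp : p.Prime) (hodd : Odd p) :
    ∃ s : Finset (ZMod p × ZMod p × ZMod (p ^ 2)), s.card = 16 ∧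
      ∀ m : ZMod p × ZMod p × ZMod (p ^ 2), ∃! w, w ∈ s ∧
        ∃ (l : (ZMod p)ˣ) (j k : ZMod p) (i : (ZMod (p ^ 2))ˣ),
          w = H4act p l j k i m := by
  have := Fact.mk hp
  have hchar : ringChar (ZMod p) ≠ 2 := by
    rw [ZMod.ringChar_zmod_n]
    rintro rfl
    exact absurd hodd (by decide)
  have h2 : (2 : ZMod p) ≠ 0 := Ring.two_ne_zero hchar
  obtain ⟨ε, hε⟩ := FiniteField.exists_nonsquare hchar
  refine ⟨orbitReps ε, card_orbitReps hε, fun m => ⟨normalForm ε m,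
    ⟨normalForm_mem_orbitReps ε m, exists_H4act_eq_normalForm h2 hε m⟩, ?_⟩⟩
  rintro w ⟨hw, l, j, k, i, rfl⟩
  rw [← normalForm_H4act h2 ε l j k i m, normalForm_eq_self hε hw]
end

section
/- Let p be an odd prime. The orbit of uv under the action of Aut(Z/p^2 × Z/p) on H^4(Z/p^2 × Z/p, Z) described by ρ^*u = lu + pjv, ρ^*v = ku + iv contains all classes of the form k·uv + l·u^2 with k ∈ (Z/p)^* and l ∈ Z/p; this orbit has size p^2(p−1). -/
/-- The orbit of the class `uv = (0, 1, 0)` under the automorphism action. -/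
def orbitUV (p : ℕ) : Set (ZMod p × ZMod p × ZMod (p ^ 2)) :=
  {m | ∃ (l : (ZMod p)ˣ) (j k : ZMod p) (i : (ZMod (p ^ 2))ˣ),
    m = H4act p l j k i ((0 : ZMod p), (1 : ZMod p), (0 : ZMod (p ^ 2)))}

section aux

variable {p : ℕ} (hp : p.Prime)

/-- `p*u` in `ZMod (p^2)` only depends on `u.val` mod `p`. -/
lemma mulp_eq (hp : p.Prime) (u v : ZMod (p ^ 2))
    (h : (u.val : ZMod p) = (v.val : ZMod p)) :
    (p : ZMod (p ^ 2)) * u = (p : ZMod (p ^ 2)) * v := by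
  haveI : Fact p.Prime := ⟨hp⟩
  haveI : NeZero (p ^ 2) := ⟨pow_ne_zero 2 hp.ne_zero⟩
  have key : ∀ w : ZMod (p ^ 2),
      (p : ZMod (p ^ 2)) * w = ((p * (w.val % p) : ℕ) : ZMod (p ^ 2)) := by
    intro w
    conv_lhs => rw [show w = ((w.val : ℕ) : ZMod (p ^ 2)) by
      rw [ZMod.natCast_val, ZMod.cast_id]]
    rw [← Nat.cast_mul]
    have hd : p * w.val = p ^ 2 * (w.val / p) + p * (w.val % p) := by
      conv_lhs => rw [← Nat.div_add_mod w.val p]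
      ring
    rw [hd, Nat.cast_add, Nat.cast_mul, ZMod.natCast_self, zero_mul, zero_add]
  have hmod : u.val % p = v.val % p := by
    rwa [ZMod.natCast_eq_natCast_iff'] at h
  rw [key, key, hmod]

/-- the cast homomorphism -/
noncomputable def phi (p : ℕ) : ZMod (p ^ 2) →+* ZMod p :=
  ZMod.castHom (dvd_pow_self p two_ne_zero) (ZMod p)

lemma phi_eq (hp : p.Prime) (u : ZMod (p ^ 2)) : phi p u = (u.val : ZMod p) := by
  haveI : Fact p.Prime := ⟨hp⟩
  haveI : NeZero (p ^ 2) := ⟨pow_ne_zero 2 hp.ne_zero⟩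
  rw [phi, ZMod.castHom_apply, ← ZMod.natCast_val]

lemma phi_natCast (hp : p.Prime) (n : ℕ) : phi p ((n : ZMod (p ^ 2))) = (n : ZMod p) := by
  simp [phi]

lemma phi_valCast (hp : p.Prime) (c : ZMod p) :
    phi p ((c.val : ℕ) : ZMod (p ^ 2)) = c := by
  haveI : Fact p.Prime := ⟨hp⟩
  rw [phi_natCast hp, ZMod.natCast_val, ZMod.cast_id]

/-- generalized membership lemma -/
lemma mem_orbit (hp : p.Prime) (a : ZMod p) (b : (ZMod p)ˣ) (c : ZMod p) :
    (a, (b : ZMod p), (p : ZMod (p ^ 2)) * ((c.val : ℕ) : ZMod (p ^ 2))) ∈ orbitUV p := by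
  haveI : Fact p.Prime := ⟨hp⟩
  haveI : NeZero (p ^ 2) := ⟨pow_ne_zero 2 hp.ne_zero⟩
  have hco : Nat.Coprime ((b : ZMod p)).val (p ^ 2) :=
    (ZMod.val_coe_unit_coprime b).pow_right 2
  refine ⟨1, (b : ZMod p)⁻¹ * c, a, ZMod.unitOfCoprime _ hco, ?_⟩
  have hbval : ((ZMod.unitOfCoprime _ hco : (ZMod (p ^ 2))ˣ) : ZMod (p ^ 2))
      = (((b : ZMod p).val : ℕ) : ZMod (p ^ 2)) := rfl
  have hvlt : (b : ZMod p).val < p ^ 2 := lt_of_lt_of_le ((b : ZMod p).val_lt)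
    (Nat.le_self_pow two_ne_zero p)
  have hval2 : (((((b : ZMod p).val : ℕ) : ZMod (p ^ 2))).val) = (b : ZMod p).val :=
    ZMod.val_cast_of_lt hvlt
  have hb : ((((ZMod.unitOfCoprime _ hco : (ZMod (p ^ 2))ˣ) : ZMod (p ^ 2)).val : ZMod p))
      = (b : ZMod p) := by
    rw [hbval, hval2, ZMod.natCast_val, ZMod.cast_id]
  have h1 : ((1 : ZMod p)).val = 1 := ZMod.val_one p
  have h0 : ((0 : ZMod (p ^ 2))).val = 0 := ZMod.val_zero
  simp only [H4act, Prod.mk.injEq, h0, h1, Nat.cast_zero, Nat.cast_one, Units.val_one]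
  refine ⟨by ring, by rw [hb]; ring, ?_⟩
  -- z component
  rw [mul_zero, add_zero, mul_one, mul_assoc]
  refine (mulp_eq hp _ _ ?_).symm
  rw [← phi_eq hp, ← phi_eq hp, map_mul, hbval, phi_valCast hp, phi_valCast hp,
    phi_valCast hp, ← mul_assoc, mul_inv_cancel₀ (Units.ne_zero b), one_mul]

theorem orbit_eq_range (hp : p.Prime) :
    orbitUV p = Set.range (fun t : ZMod p × (ZMod p)ˣ × ZMod p =>
      ((t.1, (t.2.1 : ZMod p), (p : ZMod (p ^ 2)) * ((t.2.2.val : ℕ) : ZMod (p ^ 2)))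
        : ZMod p × ZMod p × ZMod (p ^ 2))) := by
  haveI : Fact p.Prime := ⟨hp⟩
  haveI : NeZero (p ^ 2) := ⟨pow_ne_zero 2 hp.ne_zero⟩
  ext m
  constructor
  · rintro ⟨l, j, k, i, rfl⟩
    have hiu : IsUnit (phi p (i : ZMod (p ^ 2))) := (Units.map (phi p).toMonoidHom i).isUnit
    refine ⟨((l : ZMod p) * k, hiu.unit * l, phi p ((i : ZMod (p ^ 2))) * j), ?_⟩
    have h1 : ((1 : ZMod p)).val = 1 := ZMod.val_one p
    have h0 : ((0 : ZMod (p ^ 2))).val = 0 := ZMod.val_zero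
    simp only [H4act, Prod.mk.injEq, h0, h1, Nat.cast_zero, Nat.cast_one]
    refine ⟨by push_cast; ring, ?_, ?_⟩
    · rw [Units.val_mul, IsUnit.unit_spec, phi_eq hp]; ring
    · rw [mul_zero, add_zero, mul_one, mul_assoc]
      apply mulp_eq hp
      rw [← phi_eq hp, ← phi_eq hp, phi_valCast hp, map_mul, phi_valCast hp]
  · rintro ⟨⟨a, b, c⟩, rfl⟩
    exact mem_orbit hp a b c

end aux


/-- Let `p` be an odd prime.  The orbit of `uv` under the action of
`Aut(Z/p² × Z/p)` on `H⁴(Z/p² × Z/p, Z)` contains every class `k·uv + l·u²`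
with `k ∈ (Z/p)ˣ`, `l ∈ Z/p`, and this orbit has size `p²(p−1)`. -/
theorem orbit_of_uv (p : ℕ) (hp : p.Prime) (hodd : Odd p) :
    (∀ k : ZMod p, k ≠ 0 → ∀ l : ZMod p,
      ((l, k, (0 : ZMod (p ^ 2))) ∈ orbitUV p)) ∧
    Nat.card (orbitUV p) = p ^ 2 * (p - 1) := by
  haveI : Fact p.Prime := ⟨hp⟩
  haveI : NeZero (p ^ 2) := ⟨pow_ne_zero 2 hp.ne_zero⟩
  constructor
  · intro k hk l
    have hku : IsUnit k := isUnit_iff_ne_zero.mpr hk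
    have := mem_orbit hp l hku.unit 0
    simpa [hku.unit_spec] using this
  · rw [orbit_eq_range hp]
    have hinj : Function.Injective (fun t : ZMod p × (ZMod p)ˣ × ZMod p =>
        ((t.1, (t.2.1 : ZMod p), (p : ZMod (p ^ 2)) * ((t.2.2.val : ℕ) : ZMod (p ^ 2)))
          : ZMod p × ZMod p × ZMod (p ^ 2)))  := by
      rintro ⟨a, b, c⟩ ⟨a', b', c'⟩ h
      simp only [Prod.mk.injEq] at h
      obtain ⟨h1, h2, h3⟩ := h
      have hb : b = b' := Units.ext h2
      have hc : c = c' := by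
        have e : ((p * c.val : ℕ) : ZMod (p ^ 2)) = ((p * c'.val : ℕ) : ZMod (p ^ 2)) := by
          push_cast; exact h3
        have lt : ∀ d : ZMod p, p * d.val < p ^ 2 := fun d => by
          have := d.val_lt
          calc p * d.val < p * p := by
                exact (Nat.mul_lt_mul_left hp.pos).mpr this
            _ = p ^ 2 := (sq p).symm
        have := ZMod.val_cast_of_lt (lt c)
        have := ZMod.val_cast_of_lt (lt c')
        have hval : p * c.val = p * c'.val := by
          rw [← ZMod.val_cast_of_lt (lt c), ← ZMod.val_cast_of_lt (lt c'), e]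
        have : c.val = c'.val := Nat.eq_of_mul_eq_mul_left hp.pos hval
        calc c = ((c.val : ℕ) : ZMod p) := by rw [ZMod.natCast_val, ZMod.cast_id]
          _ = ((c'.val : ℕ) : ZMod p) := by rw [this]
          _ = c' := by rw [ZMod.natCast_val, ZMod.cast_id]
      exact Prod.ext h1 (Prod.ext hb hc)
    rw [Nat.card_range_of_injective hinj]
    have h1 : Nat.card (ZMod p) = p := by simp [Nat.card_eq_fintype_card]
    have h2 : Nat.card ((ZMod p)ˣ) = p - 1 := by
      rw [Nat.card_eq_fintype_card, ZMod.card_units_eq_totient, Nat.totient_prime hp]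
    rw [Nat.card_prod, Nat.card_prod, h1, h2]
    ring
end
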